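/- Let Γ be a d×d real matrix with spectral radius strictly less than γ for some γ ∈ (0,1), and suppose {e_n}_{n ≥ 1} is a sequence of random vectors in ℝ^d with ‖e_n‖_{L^p} ≤ C τ_n^{−1/2} for some p ≥ 1, C > 0, and τ_n = ⌊c n^a⌋ with c > 0, a > 1. Define μ_0 = 0 and μ_n = Γ μ_{n−1} + e_n. Then sup_n τ_n^{1/2} ‖μ_n‖_{L^p} < ∞. -/

import Mathlib

/-!
Unrolling the recursion gives `μ_n = ∑_{k<n} Γ^k e_{n-k}`. By Gelfand's formula the spectral
bound yields `‖Γ^k‖ ≤ K γ^k`, so Minkowski's inequality gives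
`‖μ_n‖_p ≤ K C ∑_{k<n} γ^k τ_{n-k}^{-1/2}`. Since `n ≤ (n-k)(k+1)`, the ratio `τ_n / τ_{n-k}`
grows only polynomially in `k`, which the geometric factor `γ^k` absorbs. Here `τ_n = ⌊c n^a⌋` is
`floorPow c a n`.
-/

open MeasureTheory Filter Finset Matrix
open scoped ENNReal NNReal

theorem spectralRadius_lt_ofReal_of_forall_norm_lt {𝕜 A : Type*} [NormedField 𝕜]
    [ProperSpace 𝕜] [NormedRing A] [NormedAlgebra 𝕜 A] [CompleteSpace A] {a : A} {r : ℝ}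
    (hr : 0 < r)
    (h : ∀ z ∈ spectrum 𝕜 a, ‖z‖ < r) : spectralRadius 𝕜 a < ENNReal.ofReal r := by
  rcases (spectrum 𝕜 a).eq_empty_or_nonempty with hempty | hne
  · simpa [spectralRadius, hempty] using hr
  · refine spectrum.spectralRadius_lt_of_forall_lt_of_nonempty hne fun z hz => ?_
    rw [← NNReal.coe_lt_coe, Real.coe_toNNReal _ hr.le]
    exact h z hz

theorem exists_norm_pow_le_mul_pow_of_spectralRadius_lt {A : Type*} [NormedRing A]
    [NormedAlgebra ℂ A] [CompleteSpace A] {a : A} {r : ℝ}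
    (h : spectralRadius ℂ a < ENNReal.ofReal r) : ∃ K, ∀ k : ℕ, ‖a ^ k‖ ≤ K * r ^ k := by
  have hr : 0 < r := ENNReal.ofReal_pos.mp (pos_of_gt h)
  have hev : ∀ᶠ k : ℕ in atTop, ‖a ^ k‖ / r ^ k ≤ 1 := by
    have hgelfand := spectrum.pow_norm_pow_one_div_tendsto_nhds_spectralRadius a
    filter_upwards [hgelfand.eventually_lt_const h, eventually_ne_atTop 0] with k hk hk0
    rw [ENNReal.ofReal_lt_ofReal_iff hr, one_div] at hk
    rw [div_le_one (by positivity), ← Real.rpow_inv_natCast_pow (norm_nonneg (a ^ k)) hk0]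
    exact pow_le_pow_left₀ (by positivity) hk.le k
  obtain ⟨K, hK⟩ := (isBoundedUnder_of_eventually_le hev).bddAbove_range
  exact ⟨K, fun k => (div_le_iff₀ (by positivity)).mp (hK ⟨k, rfl⟩)⟩

section LinftyOpNorm

attribute [local instance] Matrix.linftyOpNormedRing Matrix.linftyOpNormedAlgebra

theorem Matrix.exists_norm_pow_mulVec_le {ι : Type*} [Fintype ι] [DecidableEq ι]
    (Γ : Matrix ι ι ℝ) {γ : ℝ} (hγ : 0 < γ)
    (hspec : ∀ z ∈ spectrum ℂ (Γ.map (algebraMap ℝ ℂ)), ‖z‖ < γ) :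
    ∃ K, 0 ≤ K ∧ ∀ (k : ℕ) (v : ι → ℝ), ‖(Γ ^ k) *ᵥ v‖ ≤ K * γ ^ k * ‖v‖ := by
  have : CompleteSpace (Matrix ι ι ℂ) := FiniteDimensional.complete ℂ _
  obtain ⟨K, hK⟩ := exists_norm_pow_le_mul_pow_of_spectralRadius_lt
    (spectralRadius_lt_ofReal_of_forall_norm_lt hγ hspec)
  have hnorm : ∀ k : ℕ, ‖Γ ^ k‖ ≤ K * γ ^ k := fun k => by
    have := hK k
    rw [← Matrix.map_pow, Matrix.linfty_opNorm_def] at this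
    simpa [Matrix.linfty_opNorm_def] using this
  refine ⟨K, by simpa using (norm_nonneg _).trans (hnorm 0), fun k v => ?_⟩
  exact (Matrix.linfty_opNorm_mulVec _ v).trans (by gcongr; exact hnorm k)

end LinftyOpNorm

theorem Matrix.eq_sum_pow_mulVec_of_recursion {ι R : Type*} [Fintype ι] [DecidableEq ι]
    [CommSemiring R] (A : Matrix ι ι R) {x u : ℕ → ι → R} (h0 : x 0 = 0)
    (hrec : ∀ n, x (n + 1) = A *ᵥ x n + u (n + 1)) (n : ℕ) :
    x n = ∑ k ∈ range n, (A ^ k) *ᵥ u (n - k) := by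
  induction n with
  | zero => simpa using h0
  | succ n ih =>
    rw [hrec, ih, sum_range_succ', mulVec_sum]
    simp [mulVec_mulVec, ← pow_succ']

theorem eLpNorm_le_sum_of_mulVec_recursion {Ω ι : Type*} [MeasurableSpace Ω] [Fintype ι]
    [DecidableEq ι] {P : Measure Ω} {p : ℝ≥0∞} (hp : 1 ≤ p) (A : Matrix ι ι ℝ) {b : ℕ → ℝ}
    (hb : ∀ (k : ℕ) (v : ι → ℝ), ‖(A ^ k) *ᵥ v‖ ≤ b k * ‖v‖) {x u : ℕ → Ω → ι → ℝ}
    (hu : ∀ n, AEStronglyMeasurable (u n) P) (h0 : x 0 = 0)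
    (hrec : ∀ n, x (n + 1) = fun ω => A *ᵥ x n ω + u (n + 1) ω) (n : ℕ) :
    eLpNorm (x n) p P ≤ ∑ k ∈ range n, ENNReal.ofReal (b k) * eLpNorm (u (n - k)) p P := by
  have hx : x n = ∑ k ∈ range n, fun ω => (A ^ k) *ᵥ u (n - k) ω := by
    ext ω : 1
    rw [Finset.sum_apply]
    exact A.eq_sum_pow_mulVec_of_recursion (x := fun n => x n ω) (u := fun n => u n ω)
      (congrFun h0 ω) (fun n => congrFun (hrec n) ω) n
  rw [hx]
  refine (eLpNorm_sum_le (fun k _ => ?_) hp).trans (sum_le_sum fun k _ => ?_)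
  · exact (A ^ k).mulVecLin.continuous_of_finiteDimensional.comp_aestronglyMeasurable (hu _)
  · exact eLpNorm_le_mul_eLpNorm_of_ae_le_mul (ae_of_all _ fun ω => hb k _) p

theorem le_two_mul_floor {x : ℝ} (hx : 1 ≤ x) : x ≤ 2 * ⌊x⌋ := by
  rcases le_or_gt x 2 with hx2 | hx2
  · have : (1 : ℝ) ≤ ⌊x⌋ := by exact_mod_cast Int.le_floor.mpr (by exact_mod_cast hx)
    linarith
  · linarith [Int.sub_one_lt_floor x]

noncomputable def floorPow (c a : ℝ) (n : ℕ) : ℝ := ⌊c * (n : ℝ) ^ a⌋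

section FloorPow

variable {c a : ℝ}

theorem one_le_mul_rpow (hc : 1 ≤ c) (ha : 0 ≤ a) {m : ℕ} (hm : 1 ≤ m) : 1 ≤ c * (m : ℝ) ^ a :=
  one_le_mul_of_one_le_of_one_le hc (Real.one_le_rpow (by exact_mod_cast hm) ha)

theorem floorPow_pos (hc : 1 ≤ c) (ha : 0 ≤ a) {m : ℕ} (hm : 1 ≤ m) : 0 < floorPow c a m := by
  have h1 := one_le_mul_rpow hc ha hm
  have h2 := le_two_mul_floor h1
  unfold floorPow
  linarith

theorem floorPow_add_le (hc : 1 ≤ c) (ha : 0 ≤ a) {m : ℕ} (hm : 1 ≤ m) (k : ℕ) :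
    floorPow c a (m + k) ≤ 2 * ((k : ℝ) + 1) ^ a * floorPow c a m := by
  have hm' : (1 : ℝ) ≤ m := by exact_mod_cast hm
  calc floorPow c a (m + k) ≤ c * ((m : ℝ) + k) ^ a := by
        simpa [floorPow] using Int.floor_le (c * ((m + k : ℕ) : ℝ) ^ a)
    _ ≤ c * ((m : ℝ) * (k + 1)) ^ a := by gcongr; nlinarith
    _ = (c * (m : ℝ) ^ a) * ((k : ℝ) + 1) ^ a := by
        rw [Real.mul_rpow (by positivity) (by positivity)]; ring
    _ ≤ 2 * floorPow c a m * ((k : ℝ) + 1) ^ a := by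
        gcongr ?_ * _; exact le_two_mul_floor (one_le_mul_rpow hc ha hm)
    _ = 2 * ((k : ℝ) + 1) ^ a * floorPow c a m := by ring

theorem sqrt_floorPow_add_le (hc : 1 ≤ c) (ha : 0 ≤ a) {m : ℕ} (hm : 1 ≤ m) (k : ℕ) :
    √(floorPow c a (m + k)) ≤ √2 * ((k : ℝ) + 1) ^ ⌈a⌉₊ * √(floorPow c a m) := by
  have hk : (1 : ℝ) ≤ (k : ℝ) + 1 := by linarith [k.cast_nonneg (α := ℝ)]
  have hpow : ((k : ℝ) + 1) ^ a ≤ (((k : ℝ) + 1) ^ ⌈a⌉₊) ^ 2 := by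
    rw [← pow_mul, ← Real.rpow_natCast]
    refine Real.rpow_le_rpow_of_exponent_le hk ?_
    push_cast
    linarith [Nat.le_ceil a]
  calc √(floorPow c a (m + k)) ≤ √(2 * (((k : ℝ) + 1) ^ ⌈a⌉₊) ^ 2 * floorPow c a m) := by
        gcongr
        exact (floorPow_add_le hc ha hm k).trans (by gcongr; exact (floorPow_pos hc ha hm).le)
    _ = √2 * ((k : ℝ) + 1) ^ ⌈a⌉₊ * √(floorPow c a m) := by
        rw [Real.sqrt_mul (by positivity), Real.sqrt_mul (by positivity),
          Real.sqrt_sq (by positivity)]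

end FloorPow

theorem summable_pow_mul_add_one_pow {r : ℝ} (hr0 : 0 < r) (hr1 : r < 1) (N : ℕ) :
    Summable fun k : ℕ => r ^ k * ((k : ℝ) + 1) ^ N := by
  have hshift := (summable_nat_add_iff 1).mpr
    (summable_pow_mul_geometric_of_norm_lt_one N (r := r) (by rwa [Real.norm_of_nonneg hr0.le]))
  refine (hshift.mul_left r⁻¹).congr fun k => ?_
  field_simp
  push_cast
  ring

theorem exists_sqrt_floorPow_mul_sum_le {γ c a : ℝ} (hγ0 : 0 < γ) (hγ1 : γ < 1) (hc : 1 ≤ c)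
    (ha : 0 ≤ a) : ∃ B, ∀ n : ℕ,
      √(floorPow c a n) * ∑ k ∈ range n, γ ^ k / √(floorPow c a (n - k)) ≤ B := by
  set N := ⌈a⌉₊
  refine ⟨√2 * ∑' k : ℕ, γ ^ k * ((k : ℝ) + 1) ^ N, fun n => ?_⟩
  have hterm : ∀ k ∈ range n, √(floorPow c a n) * (γ ^ k / √(floorPow c a (n - k))) ≤
      √2 * (γ ^ k * ((k : ℝ) + 1) ^ N) := fun k hk => by
    have hm : 1 ≤ n - k := by have := mem_range.mp hk; omega
    have hpos := Real.sqrt_pos.mpr (floorPow_pos hc ha hm)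
    have hratio := sqrt_floorPow_add_le hc ha hm k
    rw [Nat.sub_add_cancel (mem_range.mp hk).le] at hratio
    rw [mul_div_assoc', div_le_iff₀ hpos]
    calc √(floorPow c a n) * γ ^ k
        ≤ √2 * ((k : ℝ) + 1) ^ N * √(floorPow c a (n - k)) * γ ^ k := by gcongr
      _ = _ := by ring
  calc _ ≤ ∑ k ∈ range n, √2 * (γ ^ k * ((k : ℝ) + 1) ^ N) := by
        rw [mul_sum]; exact sum_le_sum hterm
    _ ≤ √2 * ∑' k : ℕ, γ ^ k * ((k : ℝ) + 1) ^ N := by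
        rw [← mul_sum]
        gcongr
        exact (summable_pow_mul_add_one_pow hγ0 hγ1 N).sum_le_tsum _ fun _ _ => by positivity

theorem stmt_8_general {d : ℕ} {Ω : Type*} [MeasurableSpace Ω] (P : Measure Ω)
    (Γ : Matrix (Fin d) (Fin d) ℝ) (γ : ℝ)
    (hγ : γ ∈ Set.Ioo (0 : ℝ) 1)
    (hspec : ∀ z ∈ spectrum ℂ (Γ.map (algebraMap ℝ ℂ)), ‖z‖ < γ)
    (e : ℕ → Ω → (Fin d → ℝ)) (hmeas : ∀ n, AEStronglyMeasurable (e n) P)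
    (p : ℝ≥0∞) (hp : 1 ≤ p) (C c a : ℝ) (hC : 0 < C) (hc : 1 ≤ c) (ha : 1 < a)
    (he : ∀ n : ℕ, 1 ≤ n →
      eLpNorm (e n) p P ≤ ENNReal.ofReal (C / Real.sqrt ((⌊c * (n : ℝ) ^ a⌋ : ℤ) : ℝ)))
    (μseq : ℕ → Ω → (Fin d → ℝ)) (hμ0 : μseq 0 = fun _ => 0)
    (hμrec : ∀ n, μseq (n + 1) = fun ω => Γ.mulVec (μseq n ω) + e (n + 1) ω) :
    (⨆ n : ℕ, ENNReal.ofReal (Real.sqrt ((⌊c * (n : ℝ) ^ a⌋ : ℤ) : ℝ)) *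
        eLpNorm (μseq n) p P) < ⊤ := by
  obtain ⟨hγ0, hγ1⟩ := hγ
  obtain ⟨K, hK0, hK⟩ := Γ.exists_norm_pow_mulVec_le hγ0 hspec
  obtain ⟨B, hB⟩ := exists_sqrt_floorPow_mul_sum_le hγ0 hγ1 hc (by linarith : 0 ≤ a)
  refine (iSup_le fun n => ?_).trans_lt (ENNReal.ofReal_lt_top (r := K * C * B))
  have hμ := eLpNorm_le_sum_of_mulVec_recursion hp Γ hK hmeas hμ0 hμrec n
  calc ENNReal.ofReal √(floorPow c a n) * eLpNorm (μseq n) p P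
      ≤ ENNReal.ofReal √(floorPow c a n) *
          ∑ k ∈ range n,
            ENNReal.ofReal (K * γ ^ k) * ENNReal.ofReal (C / √(floorPow c a (n - k))) := by
        gcongr
        refine hμ.trans (sum_le_sum fun k hk => ?_)
        gcongr
        exact he _ (by have := mem_range.mp hk; omega)
    _ = ENNReal.ofReal
          (K * C * (√(floorPow c a n) * ∑ k ∈ range n, γ ^ k / √(floorPow c a (n - k)))) := by
        simp_rw [← ENNReal.ofReal_mul (by positivity : 0 ≤ K * γ ^ _)]
        rw [← ENNReal.ofReal_sum_of_nonneg (fun _ _ => by positivity),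
          ← ENNReal.ofReal_mul (Real.sqrt_nonneg _)]
        congr 1
        simp_rw [mul_sum]
        exact sum_congr rfl fun k _ => by ring
    _ ≤ ENNReal.ofReal (K * C * B) := ENNReal.ofReal_le_ofReal (by gcongr; exact hB n)

theorem stmt_8 {d : ℕ} {Ω : Type*} [MeasurableSpace Ω] (P : Measure Ω)
    [IsProbabilityMeasure P] (Γ : Matrix (Fin d) (Fin d) ℝ) (γ : ℝ)
    (hγ : γ ∈ Set.Ioo (0 : ℝ) 1)
    (hspec : ∀ z ∈ spectrum ℂ (Γ.map (algebraMap ℝ ℂ)), ‖z‖ < γ)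
    (e : ℕ → Ω → (Fin d → ℝ)) (hmeas : ∀ n, AEStronglyMeasurable (e n) P)
    (p : ℝ≥0∞) (hp : 1 ≤ p) (C c a : ℝ) (hC : 0 < C) (hc : 1 ≤ c) (ha : 1 < a)
    (he : ∀ n : ℕ, 1 ≤ n →
      eLpNorm (e n) p P ≤ ENNReal.ofReal (C / Real.sqrt ((⌊c * (n : ℝ) ^ a⌋ : ℤ) : ℝ)))
    (μseq : ℕ → Ω → (Fin d → ℝ)) (hμ0 : μseq 0 = fun _ => 0)
    (hμrec : ∀ n, μseq (n + 1) = fun ω => Γ.mulVec (μseq n ω) + e (n + 1) ω) :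
    (⨆ n : ℕ, ENNReal.ofReal (Real.sqrt ((⌊c * (n : ℝ) ^ a⌋ : ℤ) : ℝ)) *
        eLpNorm (μseq n) p P) < ⊤ :=
  stmt_8_general P Γ γ hγ hspec e hmeas p hp C c a hC hc ha he μseq hμ0 hμrec
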